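/- Let G = (V,E) be a connected finite simple undirected graph on n ≥ 3 vertices and let L ≥ 1 be an integer. Then G has a spanning tree with at least L leaves if and only if there exists a nonempty set S ⊆ V such that G[S] is connected and |N(S) \ S| ≥ L, where N(S) is the set of vertices of V having at least one neighbor in S. -/

import Mathlib

namespace CMCPaper

variable {V : Type*}

/-- Set of edges of `G` with exactly one endpoint in `S`. -/
def cutSet (G : SimpleGraph V) (S : Set V) : Set (Sym2 V) :=
  {e | e ∈ G.edgeSet ∧ ∃ u v, e = s(u, v) ∧ u ∈ S ∧ v ∉ S}

/-- Weight of the cut `δ(S)`. -/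
noncomputable def cutWeight (G : SimpleGraph V) (w : Sym2 V → ℕ) (S : Set V) : ℕ :=
  ∑ᶠ e ∈ cutSet G S, w e

/-- Total weight of all edges of `G` (the number of 1-edges, for 0/1 weights). -/
noncomputable def totalWeight (G : SimpleGraph V) (w : Sym2 V → ℕ) : ℕ :=
  ∑ᶠ e ∈ G.edgeSet, w e

/-- `W_G(v)`: total weight of edges of `G` incident to `v`. -/
noncomputable def vertexWeight (G : SimpleGraph V) (w : Sym2 V → ℕ) (v : V) : ℕ :=
  ∑ᶠ e ∈ {e ∈ G.edgeSet | v ∈ e}, w e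

/-- `G` contains no path on three (distinct) vertices all of degree 2. -/
def NoDeg2Path3 (G : SimpleGraph V) : Prop :=
  ¬ ∃ u v w : V, u ≠ w ∧ G.Adj u v ∧ G.Adj v w ∧
      (G.neighborSet u).ncard = 2 ∧ (G.neighborSet v).ncard = 2 ∧
      (G.neighborSet w).ncard = 2

/-!
Let `S` be the set of non-leaves of a spanning tree `T`. On at least three vertices no two leaves
are adjacent, so every leaf hangs on a vertex of `S`, and a path of `T` between two vertices
of `S` cannot pass through a leaf; hence `G[S]` is connected and every leaf lies in `N(S) \ S`.

Conversely, take `S` maximal among the sets with `G[S]` connected and `|N(S) \ S| ≥ L`. If some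
vertex had no neighbour in `S`, connectivity of `G` would give `x ∈ N(S) \ S` with a neighbour
`z ∉ S ∪ N(S)`; then `G[S ∪ {x}]` is connected and its boundary trades `x` for `z`,
contradicting maximality. So `N(S) \ S = V \ S`, and hanging every vertex outside `S` on one of
its neighbours in `S` turns a spanning tree of `G[S]` into a spanning tree of `G` with all of them
as leaves.
-/

section

open SimpleGraph

variable {G T : SimpleGraph V} {S : Set V}

def _root_.SimpleGraph.outerBoundary (G : SimpleGraph V) (S : Set V) : Set V :=
  {v | ∃ u ∈ S, G.Adj u v} \ S

def _root_.SimpleGraph.leafSet (T : SimpleGraph V) : Set V :=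
  {v | (T.neighborSet v).ncard = 1}

lemma _root_.SimpleGraph.neighborSet_eq_singleton_of_mem_leafSet {v w : V} (hv : v ∈ T.leafSet)
    (h : T.Adj v w) : T.neighborSet v = {w} := by
  obtain ⟨a, ha⟩ := Set.ncard_eq_one.mp hv
  have hw : w ∈ T.neighborSet v := h
  rw [ha, Set.mem_singleton_iff] at hw
  rw [ha, hw]

lemma _root_.SimpleGraph.Connected.not_adj_of_mem_leafSet [Fintype V] (hT : T.Connected)
    (hV : 3 ≤ Fintype.card V) {u v : V} (hu : u ∈ T.leafSet) (hv : v ∈ T.leafSet) :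
    ¬ T.Adj u v := by
  classical
  intro huv
  obtain ⟨x, -, hx⟩ := Finset.exists_mem_notMem_of_card_lt_card
    (s := {u, v}) (t := Finset.univ) <| by
      rw [Finset.card_univ]
      exact (Finset.card_le_two).trans_lt hV
  obtain ⟨p⟩ := hT.preconnected u x
  obtain ⟨d, -, hd_fst, hd_snd⟩ := p.exists_boundary_dart {u, v} (by simp) (by simpa using hx)
  have hclosed : ∀ w ∈ ({u, v} : Set V), T.neighborSet w ⊆ {u, v} := by
    rintro w (rfl | rfl)
    · simp [neighborSet_eq_singleton_of_mem_leafSet hu huv]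
    · simp [neighborSet_eq_singleton_of_mem_leafSet hv huv.symm]
  exact hd_snd (hclosed _ hd_fst d.adj)

lemma _root_.SimpleGraph.Connected.leafSet_subset_outerBoundary [Fintype V] (hTG : T ≤ G)
    (hT : T.Connected) (hV : 3 ≤ Fintype.card V) :
    T.leafSet ⊆ G.outerBoundary T.leafSetᶜ := by
  intro v hv
  obtain ⟨a, ha⟩ := Set.ncard_eq_one.mp hv
  have hva : T.Adj v a := ha.ge rfl
  exact ⟨⟨a, fun ha' => hT.not_adj_of_mem_leafSet hV hv ha' hva, hTG hva.symm⟩,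
    not_not.mpr hv⟩

lemma _root_.SimpleGraph.Connected.nonempty_compl_leafSet [Fintype V] (hT : T.Connected)
    (hV : 3 ≤ Fintype.card V) : T.leafSetᶜ.Nonempty := by
  have : Nontrivial V := Fintype.one_lt_card_iff_nontrivial.mp (by omega)
  obtain ⟨v⟩ := hT.nonempty
  obtain ⟨a, hva⟩ := hT.preconnected.exists_adj_of_nontrivial v
  by_cases hv : v ∈ T.leafSet
  · exact ⟨a, fun ha => hT.not_adj_of_mem_leafSet hV hv ha hva⟩
  · exact ⟨v, hv⟩

lemma _root_.SimpleGraph.Connected.induce_compl_leafSet (hTG : T ≤ G) (hT : T.Connected)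
    (hS : T.leafSetᶜ.Nonempty) : (G.induce T.leafSetᶜ).Connected := by
  have : Nonempty ↥T.leafSetᶜ := hS.to_subtype
  refine (connected_iff _).mpr ⟨?_, this⟩
  refine (hT.preconnected.induce_of_degree_eq_one fun v hv => ?_).mono
    (comap_monotone _ hTG)
  obtain ⟨a, ha⟩ := Set.ncard_eq_one.mp (not_not.mp hv)
  rw [ha]
  exact Set.subsingleton_singleton

lemma _root_.SimpleGraph.induce_insert_connected (hS : (G.induce S).Connected) {u x : V}
    (hu : u ∈ S) (hux : G.Adj u x) : (G.induce (insert x S)).Connected := by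
  rw [← Set.union_singleton]
  refine connected_induce_union hS.preconnected ?_ hu (Set.mem_singleton x) hux
  rw [induce_singleton_eq_top]
  exact preconnected_top

lemma _root_.SimpleGraph.ncard_outerBoundary_le_insert [Finite V] {x z : V}
    (hx : x ∈ G.outerBoundary S) (hxz : G.Adj x z) (hz : z ∉ S ∪ G.outerBoundary S) :
    (G.outerBoundary S).ncard ≤ (G.outerBoundary (insert x S)).ncard := by
  rw [Set.mem_union, not_or] at hz
  rw [← Set.ncard_exchange hz.2 hx]
  refine Set.ncard_le_ncard ?_
  have hzx : z ≠ x := fun h => hz.2 (h ▸ hx)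
  rintro t (rfl | ⟨⟨⟨u, hu, hut⟩, htS⟩, htx⟩)
  · exact ⟨⟨x, Set.mem_insert x S, hxz⟩, fun h => h.elim hzx hz.1⟩
  · exact ⟨⟨u, Set.mem_insert_of_mem x hu, hut⟩, fun h => h.elim htx htS⟩

lemma _root_.SimpleGraph.Connected.exists_adj_notMem_union_outerBoundary (hG : G.Connected)
    (hS : S.Nonempty) {b : V} (hb : b ∉ S ∪ G.outerBoundary S) :
    ∃ x ∈ G.outerBoundary S, ∃ z, G.Adj x z ∧ z ∉ S ∪ G.outerBoundary S := by
  obtain ⟨a, ha⟩ := hS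
  obtain ⟨p⟩ := hG.preconnected a b
  obtain ⟨⟨⟨x, z⟩, hxz⟩, -, hx, hz⟩ := p.exists_boundary_dart _ (Or.inl ha) hb
  have hxS : x ∉ S := fun h => hz (Or.inr ⟨⟨x, h, hxz⟩, fun hzS => hz (Or.inl hzS)⟩)
  exact ⟨x, hx.resolve_left hxS, z, hxz, hz⟩

lemma _root_.SimpleGraph.Connected.exists_compl_subset_outerBoundary [Finite V]
    (hG : G.Connected) {L : ℕ} (hS : (G.induce S).Connected)
    (hL : L ≤ (G.outerBoundary S).ncard) :
    ∃ S', (G.induce S').Connected ∧ L ≤ (G.outerBoundary S').ncard ∧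
      S'ᶜ ⊆ G.outerBoundary S' := by
  obtain ⟨S', hmax⟩ := (Set.toFinite {S' : Set V | (G.induce S').Connected ∧
    L ≤ (G.outerBoundary S').ncard}).exists_maximal ⟨S, hS, hL⟩
  obtain ⟨hS'c, hS'L⟩ := hmax.1
  refine ⟨S', hS'c, hS'L, fun b hb => ?_⟩
  by_contra hb'
  obtain ⟨x, hx, z, hxz, hz⟩ := hG.exists_adj_notMem_union_outerBoundary
    (Set.nonempty_coe_sort.mp hS'c.nonempty) (fun h => h.elim hb hb')
  obtain ⟨⟨u, hu, hux⟩, hxS'⟩ := hx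
  have hins : insert x S' ∈ {S' : Set V | (G.induce S').Connected ∧
      L ≤ (G.outerBoundary S').ncard} :=
    ⟨induce_insert_connected hS'c hu hux,
      hS'L.trans (ncard_outerBoundary_le_insert ⟨⟨u, hu, hux⟩, hxS'⟩ hxz hz)⟩
  exact hxS' (hmax.2 hins (Set.subset_insert x S') (Set.mem_insert x S'))

def _root_.SimpleGraph.pendantExtension (G : SimpleGraph V) (S : Set V) (f : V → V) :
    SimpleGraph V :=
  fromRel fun a b => (a ∈ S ∧ b ∈ S ∧ G.Adj a b) ∨ (a ∉ S ∧ b = f a)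

variable {f : V → V}

lemma _root_.SimpleGraph.pendantExtension_le (hf : ∀ v ∉ S, G.Adj v (f v)) :
    G.pendantExtension S f ≤ G := by
  rintro a b ⟨-, (⟨-, -, h⟩ | ⟨ha, rfl⟩) | (⟨-, -, h⟩ | ⟨hb, rfl⟩)⟩
  · exact h
  · exact hf a ha
  · exact h.symm
  · exact (hf b hb).symm

lemma _root_.SimpleGraph.neighborSet_pendantExtension_subset (hf : ∀ v ∉ S, f v ∈ S) {v : V}
    (hv : v ∉ S) :
    (G.pendantExtension S f).neighborSet v ⊆ {f v} := by
  rintro w ⟨-, (⟨hvS, -⟩ | ⟨-, rfl⟩) | (⟨-, hvS, -⟩ | ⟨hw, rfl⟩)⟩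
  · exact absurd hvS hv
  · rfl
  · exact absurd hvS hv
  · exact absurd (hf w hw) hv

lemma _root_.SimpleGraph.connected_pendantExtension (hS : (G.induce S).Connected)
    (hf : ∀ v ∉ S, f v ∈ S) : (G.pendantExtension S f).Connected := by
  obtain ⟨s, hs⟩ := hS.nonempty
  let φ : G.induce S →g G.pendantExtension S f :=
    ⟨Subtype.val, fun {a b} h =>
      ⟨fun hab => h.ne (Subtype.ext hab), Or.inl (Or.inl ⟨a.2, b.2, h⟩)⟩⟩
  have hreach : ∀ v ∈ S, (G.pendantExtension S f).Reachable v s := fun v hv =>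
    (hS.preconnected ⟨v, hv⟩ ⟨s, hs⟩).map φ
  refine (connected_iff_exists_forall_reachable _).mpr ⟨s, fun v => ?_⟩
  by_cases hv : v ∈ S
  · exact (hreach v hv).symm
  · have hvf : (G.pendantExtension S f).Adj v (f v) :=
      ⟨fun h => hv (h ▸ hf v hv), Or.inl (Or.inr ⟨hv, rfl⟩)⟩
    exact (hreach _ (hf v hv)).symm.trans hvf.symm.reachable

lemma _root_.SimpleGraph.exists_isTree_le_compl_subset_leafSet (hS : (G.induce S).Connected)
    (hdom : Sᶜ ⊆ G.outerBoundary S) : ∃ T ≤ G, T.IsTree ∧ Sᶜ ⊆ T.leafSet := by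
  have hdom' : ∀ v, ∃ u, v ∉ S → u ∈ S ∧ G.Adj v u := fun v => by
    by_cases hv : v ∈ S
    · exact ⟨v, absurd hv⟩
    · obtain ⟨⟨u, hu, huv⟩, -⟩ := hdom hv
      exact ⟨u, fun _ => ⟨hu, huv.symm⟩⟩
  choose f hf using hdom'
  have hfS : ∀ v ∉ S, f v ∈ S := fun v hv => (hf v hv).1
  obtain ⟨T, hTH, hT⟩ := (connected_pendantExtension hS hfS).exists_isTree_le
  refine ⟨T, hTH.trans (pendantExtension_le fun v hv => (hf v hv).2), hT, fun v hv => ?_⟩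
  have hsub : T.neighborSet v ⊆ {f v} :=
    (neighborSet_mono hTH v).trans (neighborSet_pendantExtension_subset hfS hv)
  have : Nontrivial V := nontrivial_of_ne v (f v) fun h => hv (h ▸ hfS v hv)
  obtain ⟨w, hvw⟩ := hT.1.preconnected.exists_adj_of_nontrivial v
  have hne : (T.neighborSet v).Nonempty := ⟨w, hvw⟩
  change (T.neighborSet v).ncard = 1
  rw [hne.subset_singleton_iff.mp hsub, Set.ncard_singleton]

end

theorem max_leaf_iff_connected_neighborhood_general {V : Type*} [Fintype V]
    (G : SimpleGraph V) (hconn : G.Connected)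
    (hn : 3 ≤ Fintype.card V)
    (L : ℕ) :
    (∃ T : SimpleGraph V, T ≤ G ∧ T.IsTree ∧
        L ≤ ({v : V | (T.neighborSet v).ncard = 1}).ncard) ↔
    (∃ S : Set V, S.Nonempty ∧ (G.induce S).Connected ∧
        L ≤ (({v : V | ∃ u ∈ S, G.Adj u v}) \ S).ncard) := by
  constructor
  · rintro ⟨T, hTG, hT, hL⟩
    have hS := hT.1.nonempty_compl_leafSet hn
    exact ⟨T.leafSetᶜ, hS, hT.1.induce_compl_leafSet hTG hS,
      hL.trans (Set.ncard_le_ncard (hT.1.leafSet_subset_outerBoundary hTG hn))⟩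
  · rintro ⟨S, -, hS, hL⟩
    obtain ⟨S', hS'c, hS'L, hdom⟩ := hconn.exists_compl_subset_outerBoundary hS hL
    obtain ⟨T, hTG, hT, hleaves⟩ := SimpleGraph.exists_isTree_le_compl_subset_leafSet hS'c hdom
    exact ⟨T, hTG, hT,
      hS'L.trans (Set.ncard_le_ncard ((Set.sdiff_subset_compl _ _).trans hleaves))⟩

/-- A connected graph on `n ≥ 3` vertices has a spanning tree with at
least `L ≥ 1` leaves iff there is a nonempty `S` with `G[S]` connected and
`|N(S) \ S| ≥ L`. -/
theorem max_leaf_iff_connected_neighborhood {V : Type*} [Fintype V]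
    (G : SimpleGraph V) (hconn : G.Connected)
    (hn : 3 ≤ Fintype.card V)
    (L : ℕ) (hL : 1 ≤ L) :
    (∃ T : SimpleGraph V, T ≤ G ∧ T.IsTree ∧
        L ≤ ({v : V | (T.neighborSet v).ncard = 1}).ncard) ↔
    (∃ S : Set V, S.Nonempty ∧ (G.induce S).Connected ∧
        L ≤ (({v : V | ∃ u ∈ S, G.Adj u v}) \ S).ncard) :=
  max_leaf_iff_connected_neighborhood_general G hconn hn L

end CMCPaper
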